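/- If u ∈ ℕ satisfies u_{i-1}, u_i, u_{i+1}, u_{i+2}, u_{i+3} ≥ u, then there exists ε with |ε| ≤ 1 such that N_i/(2√D) = (1/u_{i+1})(1 − 1/(u_i u_{i+1}) − 1/(u_{i+1} u_{i+2})) + 10ε/u⁵. -/

import Mathlib

/-!
Put `M = c (i+1) q i + q (i-1)`. Then `√D = (c (i+1) p i + p (i-1)) / M` and `(√D q i - p i) M = ±1`,
so `N i / (2√D)` equals `q i / M` up to `1 / (2√D M²) ≤ 1 / u⁵` (for `i = 1` this uses `c 1 ≤ 2√D`).
Moreover `q i / M = 1 / (u (i+1) + 1 / (u (i+2) + t) + 1 / (u i + t'))` with `0 ≤ t, t' ≤ 1 / u`,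
and expanding this to second order in the reciprocals of the partial quotients gives the main term
with an error of at most `6 / u⁵`.
-/

open Real

lemma not_isSquare_of_mod_four {D : ℕ} (hD : D % 4 = 2 ∨ D % 4 = 3) : ¬IsSquare D := by
  rintro ⟨r, rfl⟩
  have hr : r % 4 < 4 := Nat.mod_lt _ (by norm_num)
  interval_cases h : r % 4 <;> simp [Nat.mul_mod, h] at hD

lemma one_div_sqrt_sub_le_two_mul_sqrt {D : ℕ} {a : ℤ} (ha : 0 ≤ a) (hlt : (a : ℝ) < √D) :
    1 / (√D - a) ≤ 2 * √D := by
  have hsq : √D ^ 2 = D := sq_sqrt (Nat.cast_nonneg D)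
  have hgap : a ^ 2 + 1 ≤ (D : ℤ) := by
    have : (a : ℝ) ^ 2 < D := by
      rw [← hsq]; exact pow_lt_pow_left₀ hlt (Int.cast_nonneg ha) two_ne_zero
    exact_mod_cast this
  have hgapR : (a : ℝ) ^ 2 + 1 ≤ D := by exact_mod_cast hgap
  rw [div_le_iff₀ (sub_pos.mpr hlt)]
  nlinarith

lemma one_div_sub_one_div_add_le {V a t : ℝ} (hV : 0 < V) (ha : V ≤ a) (ht₀ : 0 ≤ t)
    (ht : t ≤ 1 / V) : 1 / a - 1 / (a + t) ≤ 1 / V ^ 3 := by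
  have ha₀ : 0 < a := hV.trans_le ha
  have hsub : 1 / a - 1 / (a + t) = t / (a * (a + t)) := by field_simp; ring
  rw [hsub, div_le_div_iff₀ (by positivity) (by positivity), one_mul]
  calc t * V ^ 3 ≤ 1 / V * V ^ 3 := by gcongr
    _ = V * V := by field_simp
    _ ≤ a * (a + t) := by gcongr; linarith

lemma abs_one_div_sub_expansion_le {V a₂ a₃ a₄ t₂ t₄ : ℝ} (hV : 0 < V) (h₂ : V ≤ a₂)
    (h₃ : V ≤ a₃) (h₄ : V ≤ a₄) (ht₂₀ : 0 ≤ t₂) (ht₂ : t₂ ≤ 1 / V) (ht₄₀ : 0 ≤ t₄)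
    (ht₄ : t₄ ≤ 1 / V) :
    |1 / (a₃ + 1 / (a₄ + t₄) + 1 / (a₂ + t₂)) - 1 / a₃ * (1 - 1 / (a₂ * a₃) - 1 / (a₃ * a₄))|
      ≤ 6 / V ^ 5 := by
  have ha₂ : 0 < a₂ := hV.trans_le h₂
  have ha₃ : 0 < a₃ := hV.trans_le h₃
  have ha₄ : 0 < a₄ := hV.trans_le h₄
  set s := 1 / (a₄ + t₄)
  set r := 1 / (a₂ + t₂)
  have hs₀ : 0 ≤ s := by positivity
  have hr₀ : 0 ≤ r := by positivity
  have hs₁ : s ≤ 1 / a₄ := one_div_le_one_div_of_le ha₄ (by linarith)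
  have hr₁ : r ≤ 1 / a₂ := one_div_le_one_div_of_le ha₂ (by linarith)
  have hs₃ : 1 / a₄ - s ≤ 1 / V ^ 3 := one_div_sub_one_div_add_le hV h₄ ht₄₀ ht₄
  have hr₃ : 1 / a₂ - r ≤ 1 / V ^ 3 := one_div_sub_one_div_add_le hV h₂ ht₂₀ ht₂
  -- the second-order expansion of `1 / (a₃ + s + r)` around `a₃`, with exact remainder
  have hexp : 1 / (a₃ + s + r) - 1 / a₃ * (1 - 1 / (a₂ * a₃) - 1 / (a₃ * a₄))
      = (s + r) ^ 2 / (a₃ ^ 2 * (a₃ + s + r)) + ((1 / a₂ - r) + (1 / a₄ - s)) / a₃ ^ 2 := by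
    field_simp
    ring
  have hsr : s + r ≤ 2 / V := by
    have : 1 / a₂ ≤ 1 / V := one_div_le_one_div_of_le hV h₂
    have : 1 / a₄ ≤ 1 / V := one_div_le_one_div_of_le hV h₄
    linarith [show 2 / V = 1 / V + 1 / V by ring]
  have hquad : (s + r) ^ 2 / (a₃ ^ 2 * (a₃ + s + r)) ≤ 4 / V ^ 5 := by
    calc (s + r) ^ 2 / (a₃ ^ 2 * (a₃ + s + r)) ≤ (2 / V) ^ 2 / (V ^ 2 * V) := by
          gcongr; linarith
      _ = 4 / V ^ 5 := by field_simp; ring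
  have hlin : ((1 / a₂ - r) + (1 / a₄ - s)) / a₃ ^ 2 ≤ 2 / V ^ 5 := by
    calc ((1 / a₂ - r) + (1 / a₄ - s)) / a₃ ^ 2 ≤ (1 / V ^ 3 + 1 / V ^ 3) / V ^ 2 := by
          gcongr
      _ = 2 / V ^ 5 := by ring
  rw [hexp, abs_of_nonneg (by positivity)]
  linarith [show 6 / V ^ 5 = 4 / V ^ 5 + 2 / V ^ 5 by ring]

lemma abs_abs_sq_sub_sq_div_sub_eq {y P Q M : ℝ} (hy : 0 < y) (hM : 1 ≤ M) (hyQ : 1 < 2 * y * Q)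
    (hdet : ((y * Q - P) * M) ^ 2 = 1) :
    |(|P ^ 2 - y ^ 2 * Q ^ 2| / (2 * y)) - Q / M| = 1 / (2 * y * M ^ 2) := by
  have hM₀ : 0 < M := by linarith
  have hδ : |y * Q - P| = 1 / M := by
    have : |(y * Q - P) * M| = 1 := by
      rwa [← pow_left_inj₀ (abs_nonneg _) zero_le_one two_ne_zero, sq_abs, one_pow]
    rwa [abs_mul, abs_of_pos hM₀, ← eq_div_iff hM₀.ne'] at this
  have hδ₁ : y * Q - P < 2 * y * Q := by
    have : 1 / M ≤ 1 := (div_le_one hM₀).mpr hM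
    linarith [le_abs_self (y * Q - P)]
  have hfactor : P ^ 2 - y ^ 2 * Q ^ 2 = -(y * Q - P) * (2 * y * Q - (y * Q - P)) := by ring
  rw [hfactor, abs_mul, abs_neg, hδ, abs_of_pos (sub_pos.mpr hδ₁)]
  have hsimp : 1 / M * (2 * y * Q - (y * Q - P)) / (2 * y) - Q / M
      = -(y * Q - P) / (2 * y * M) := by
    field_simp
    ring
  rw [hsimp, abs_div, abs_neg, hδ, abs_of_pos (by positivity)]
  field_simp

lemma exists_eq_add_div_of_abs_sub_le {a b C w : ℝ} (hC : 0 < C) (hw : 0 < w)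
    (h : |a - b| ≤ C / w) : ∃ ε : ℝ, |ε| ≤ 1 ∧ a = b + C * ε / w := by
  refine ⟨(a - b) * w / C, ?_, by field_simp; ring⟩
  rw [abs_div, abs_mul, abs_of_pos hC, abs_of_pos hw, div_le_one hC]
  rwa [← le_div_iff₀ hw]

structure IsCFExpansion (x : ℝ) (u : ℤ → ℤ) (c : ℤ → ℝ) (p q : ℤ → ℤ) : Prop where
  irrational : Irrational x
  c_zero : c 0 = x
  u_eq_floor : ∀ j, 0 ≤ j → u j = ⌊c j⌋
  c_succ : ∀ j, 0 ≤ j → c (j + 1) = 1 / (c j - u j)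
  p_neg_one : p (-1) = 1
  q_neg_one : q (-1) = 0
  p_zero : p 0 = u 0
  q_zero : q 0 = 1
  p_succ : ∀ j, 0 ≤ j → p (j + 1) = u (j + 1) * p j + p (j - 1)
  q_succ : ∀ j, 0 ≤ j → q (j + 1) = u (j + 1) * q j + q (j - 1)

namespace IsCFExpansion

variable {x : ℝ} {u : ℤ → ℤ} {c : ℤ → ℝ} {p q : ℤ → ℤ} {j : ℤ}

theorem c_sub_u_eq_fract (h : IsCFExpansion x u c p q) (hj : 0 ≤ j) :
    c j - u j = Int.fract (c j) := by
  rw [h.u_eq_floor j hj, Int.fract]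

theorem irrational_c (h : IsCFExpansion x u c p q) : ∀ j, 0 ≤ j → Irrational (c j) :=
  Int.leInduction (h.c_zero ▸ h.irrational) fun j hj hirr => by
    rw [h.c_succ j hj, h.u_eq_floor j hj, one_div]
    exact (hirr.sub_intCast _).inv

theorem c_sub_u_pos (h : IsCFExpansion x u c p q) (hj : 0 ≤ j) : 0 < c j - u j := by
  rw [h.c_sub_u_eq_fract hj]
  exact Int.fract_pos.mpr ((h.irrational_c j hj).ne_int _)

theorem c_sub_u_lt_one (h : IsCFExpansion x u c p q) (hj : 0 ≤ j) : c j - u j < 1 := by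
  rw [h.c_sub_u_eq_fract hj]
  exact Int.fract_lt_one _

theorem one_lt_c_succ (h : IsCFExpansion x u c p q) (hj : 0 ≤ j) : 1 < c (j + 1) := by
  rw [h.c_succ j hj]
  exact one_lt_one_div (h.c_sub_u_pos hj) (h.c_sub_u_lt_one hj)

theorem c_eq_u_add (h : IsCFExpansion x u c p q) (hj : 0 ≤ j) : c j = u j + 1 / c (j + 1) := by
  rw [h.c_succ j hj, one_div_one_div]
  ring

theorem u_le_c (h : IsCFExpansion x u c p q) (hj : 0 ≤ j) : (u j : ℝ) ≤ c j :=
  (sub_pos.mp (h.c_sub_u_pos hj)).le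

theorem one_le_u (h : IsCFExpansion x u c p q) (hj : 1 ≤ j) : 1 ≤ u j := by
  obtain ⟨k, hk, rfl⟩ : ∃ k, 0 ≤ k ∧ j = k + 1 := ⟨j - 1, by omega, by ring⟩
  rw [h.u_eq_floor _ (by omega), Int.le_floor, Int.cast_one]
  exact (h.one_lt_c_succ hk).le

theorem one_le_q (h : IsCFExpansion x u c p q) (hj : 0 ≤ j) : 1 ≤ q j := by
  have : ∀ j, 0 ≤ j → 0 ≤ q (j - 1) ∧ 1 ≤ q j := by
    refine Int.leInduction (by simp [h.q_neg_one, h.q_zero]) fun k hk ⟨hpred, hk1⟩ => ?_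
    rw [add_sub_cancel_right, h.q_succ k hk]
    have := h.one_le_u (j := k + 1) (by omega)
    constructor <;> nlinarith
  exact (this j hj).2

theorem q_nonneg (h : IsCFExpansion x u c p q) (hj : -1 ≤ j) : 0 ≤ q j := by
  rcases hj.eq_or_lt with rfl | hj
  · exact h.q_neg_one.ge
  · exact zero_le_one.trans (h.one_le_q (by omega))

theorem u_mul_q_le (h : IsCFExpansion x u c p q) (hj : 0 ≤ j) : u j * q (j - 1) ≤ q j := by
  rcases hj.eq_or_lt with rfl | hj
  · simp [h.q_neg_one, h.q_zero]
  · have hrec := h.q_succ (j - 1) (by omega)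
    rw [sub_add_cancel] at hrec
    have := h.q_nonneg (j := j - 1 - 1) (by omega)
    omega

theorem det_sq (h : IsCFExpansion x u c p q) :
    ∀ j, 0 ≤ j → (p j * q (j - 1) - p (j - 1) * q j) ^ 2 = 1 := by
  refine Int.leInduction (by simp [h.p_neg_one, h.q_neg_one, h.q_zero]) fun k hk ih => ?_
  rw [add_sub_cancel_right, h.p_succ k hk, h.q_succ k hk]
  linear_combination ih

theorem x_mul_c_mul_q_add (h : IsCFExpansion x u c p q) :
    ∀ j, 0 ≤ j → x * (c (j + 1) * q j + q (j - 1)) = c (j + 1) * p j + p (j - 1) := by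
  refine Int.leInduction ?_ fun k hk ih => ?_
  · have h0 := h.c_eq_u_add le_rfl
    have hc1 := (zero_lt_one.trans (h.one_lt_c_succ le_rfl)).ne'
    rw [h.c_zero] at h0
    simp only [zero_add, zero_sub, h.q_zero, h.q_neg_one, h.p_zero, h.p_neg_one] at h0 hc1 ⊢
    rw [h0]
    field_simp
    push_cast
    ring
  · have hc := h.c_eq_u_add (j := k + 1) (by omega)
    have hc2 := (zero_lt_one.trans (h.one_lt_c_succ (j := k + 1) (by omega))).ne'
    rw [hc] at ih
    rw [add_sub_cancel_right, h.p_succ k hk, h.q_succ k hk]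
    push_cast
    field_simp at ih ⊢
    linear_combination ih

theorem c_one_le_two_mul_sqrt {D : ℕ} (h : IsCFExpansion (√D) u c p q) : c 1 ≤ 2 * √D := by
  have hu₀ : 0 ≤ u 0 := by
    rw [h.u_eq_floor 0 le_rfl, h.c_zero]
    exact Int.floor_nonneg.mpr (sqrt_nonneg _)
  have hlt := h.c_sub_u_pos le_rfl
  rw [h.c_zero, sub_pos] at hlt
  rw [← zero_add 1, h.c_succ 0 le_rfl, h.c_zero]
  exact one_div_sqrt_sub_le_two_mul_sqrt hu₀ hlt

theorem pow_five_le_two_mul_sq (h : IsCFExpansion x u c p q) (hc₁ : c 1 ≤ 2 * x) {i : ℤ} (hi : 1 ≤ i)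
    {V : ℝ} (hV : 1 ≤ V) (h₁ : V ≤ u (i - 1)) (h₂ : V ≤ u i) (h₃ : V ≤ u (i + 1)) :
    V ^ 5 ≤ 2 * x * (c (i + 1) * q i + q (i - 1)) ^ 2 := by
  have hx : 1 ≤ 2 * x := (h.one_lt_c_succ le_rfl).le.trans (by simpa using hc₁)
  have hqi : (1 : ℝ) ≤ q i := by exact_mod_cast h.one_le_q (by omega : 0 ≤ i)
  have hq' : (0 : ℝ) ≤ q (i - 1) := by exact_mod_cast h.q_nonneg (by omega)
  have hM : V * q i ≤ c (i + 1) * q i + q (i - 1) := by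
    nlinarith [h.u_le_c (j := i + 1) (by omega)]
  rcases hi.eq_or_lt with rfl | hi
  · have hq₁ : (q 1 : ℝ) = u 1 := by
      have := h.q_succ 0 le_rfl
      simp only [zero_add, zero_sub, h.q_zero, h.q_neg_one] at this
      rw [this]; push_cast; ring
    have hV₂ : V ≤ 2 * x := h₂.trans ((h.u_le_c zero_le_one).trans hc₁)
    calc V ^ 5 = V * (V * V) ^ 2 := by ring
      _ ≤ 2 * x * (c (1 + 1) * q 1 + q (1 - 1)) ^ 2 := by
        gcongr
        rw [hq₁] at hM ⊢
        nlinarith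
  · have hq₂ : (1 : ℝ) ≤ q (i - 2) := by exact_mod_cast h.one_le_q (by omega)
    have hqi₁ : (u i : ℝ) * q (i - 1) ≤ q i := by exact_mod_cast h.u_mul_q_le (by omega)
    have hqi₂ : (u (i - 1) : ℝ) * q (i - 2) ≤ q (i - 1) := by
      have := h.u_mul_q_le (j := i - 1) (by omega)
      rw [show i - 1 - 1 = i - 2 by ring] at this
      exact_mod_cast this
    have hVq₁ : V ≤ q (i - 1) := by nlinarith
    have hVq : V * V ≤ q i := by nlinarith
    calc V ^ 5 ≤ V ^ 6 := pow_le_pow_right₀ hV (by norm_num)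
      _ = 1 * (V * (V * V)) ^ 2 := by ring
      _ ≤ 2 * x * (c (i + 1) * q i + q (i - 1)) ^ 2 := by
        have : 0 ≤ V := by linarith
        gcongr
        nlinarith

theorem abs_norm_div_sub_le (h : IsCFExpansion x u c p q) (hc₁ : c 1 ≤ 2 * x) {i : ℤ}
    (hi : 1 ≤ i) {V : ℝ} (hV : 1 ≤ V) (h₁ : V ≤ u (i - 1)) (h₂ : V ≤ u i)
    (h₃ : V ≤ u (i + 1)) :
    |(|(p i : ℝ) ^ 2 - x ^ 2 * (q i : ℝ) ^ 2| / (2 * x)) - q i / (c (i + 1) * q i + q (i - 1))|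
      ≤ 1 / V ^ 5 := by
  have hx₁ : 1 < 2 * x := (h.one_lt_c_succ le_rfl).trans_le (by simpa using hc₁)
  have hqi : (1 : ℝ) ≤ q i := by exact_mod_cast h.one_le_q (by omega : 0 ≤ i)
  have hM : 1 ≤ c (i + 1) * q i + q (i - 1) := by
    have : (0 : ℝ) ≤ q (i - 1) := by exact_mod_cast h.q_nonneg (by omega)
    nlinarith [h.one_lt_c_succ (j := i) (by omega)]
  have hdet : ((x * q i - p i) * (c (i + 1) * q i + q (i - 1))) ^ 2 = 1 := by
    have hdet : ((p i : ℝ) * q (i - 1) - p (i - 1) * q i) ^ 2 = 1 := by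
      exact_mod_cast h.det_sq i (by omega)
    have hcross : (x * q i - p i) * (c (i + 1) * q i + q (i - 1))
        = p (i - 1) * q i - p i * q (i - 1) := by
      linear_combination (q i : ℝ) * h.x_mul_c_mul_q_add i (by omega)
    rw [hcross]
    linear_combination hdet
  rw [abs_abs_sq_sub_sq_div_sub_eq (by linarith) hM (by nlinarith) hdet,
    one_div_le_one_div (by positivity) (by positivity)]
  exact h.pow_five_le_two_mul_sq hc₁ hi hV h₁ h₂ h₃

theorem abs_q_div_sub_expansion_le (h : IsCFExpansion x u c p q) {i : ℤ} (hi : 1 ≤ i) {V : ℝ}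
    (hV : 0 < V) (h₁ : V ≤ u (i - 1)) (h₂ : V ≤ u i) (h₃ : V ≤ u (i + 1)) (h₄ : V ≤ u (i + 2))
    (h₅ : V ≤ u (i + 3)) :
    |q i / (c (i + 1) * q i + q (i - 1))
        - 1 / (u (i + 1) : ℝ) * (1 - 1 / ((u i : ℝ) * u (i + 1)) - 1 / ((u (i + 1) : ℝ) * u (i + 2)))|
      ≤ 6 / V ^ 5 := by
  have hc₁ := h.c_eq_u_add (j := i + 1) (by omega)
  have hc₂ := h.c_eq_u_add (j := i + 2) (by omega)
  have hc₃ := h.one_lt_c_succ (j := i + 2) (by omega)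
  rw [show i + 1 + 1 = i + 2 by ring] at hc₁
  rw [show i + 2 + 1 = i + 3 by ring] at hc₂ hc₃
  have hc₀ := h.one_lt_c_succ (j := i) (by omega)
  have hq₀ : (1 : ℝ) ≤ q i := by exact_mod_cast h.one_le_q (by omega : 0 ≤ i)
  have hq₁ : (1 : ℝ) ≤ q (i - 1) := by exact_mod_cast h.one_le_q (by omega)
  have hq₂ : (0 : ℝ) ≤ q (i - 2) := by exact_mod_cast h.q_nonneg (by omega)
  have hq : (q i : ℝ) = u i * q (i - 1) + q (i - 2) := by
    have := h.q_succ (i - 1) (by omega)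
    rw [sub_add_cancel, show i - 1 - 1 = i - 2 by ring] at this
    exact_mod_cast this
  have hr : (q (i - 1) : ℝ) / q i = 1 / (u i + q (i - 2) / q (i - 1)) := by
    rw [hq]
    field_simp
  have hqM : q i / (c (i + 1) * q i + q (i - 1))
      = 1 / (u (i + 1) + 1 / (u (i + 2) + 1 / c (i + 3)) + 1 / (u i + q (i - 2) / q (i - 1))) := by
    rw [← hr, ← hc₂, ← hc₁]
    field_simp
  have hq₂₁ : (u (i - 1) : ℝ) * q (i - 2) ≤ q (i - 1) := by
    have := h.u_mul_q_le (j := i - 1) (by omega)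
    rw [show i - 1 - 1 = i - 2 by ring] at this
    exact_mod_cast this
  rw [hqM]
  refine abs_one_div_sub_expansion_le hV h₂ h₃ h₄ (by positivity) ?_ (by positivity) ?_
  · rw [div_le_div_iff₀ (by positivity) hV]
    nlinarith
  · exact one_div_le_one_div_of_le hV (h₅.trans (h.u_le_c (by omega)))

end IsCFExpansion

theorem stmt9_general (D : ℕ) (hD4 : D % 4 = 2 ∨ D % 4 = 3)
    (u : ℤ → ℤ) (c : ℤ → ℝ)
    (hc0 : c 0 = Real.sqrt D)
    (hu : ∀ i : ℤ, 0 ≤ i → u i = ⌊c i⌋)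
    (hcrec : ∀ i : ℤ, 0 ≤ i → c (i + 1) = 1 / (c i - u i))
    (p q : ℤ → ℤ)
    (hpm : p (-1) = 1) (hqm : q (-1) = 0)
    (hp0 : p 0 = u 0) (hq0 : q 0 = 1)
    (hprec : ∀ i : ℤ, 0 ≤ i → p (i + 1) = u (i + 1) * p i + p (i - 1))
    (hqrec : ∀ i : ℤ, 0 ≤ i → q (i + 1) = u (i + 1) * q i + q (i - 1)) :
    ∀ i : ℤ, 1 ≤ i → ∀ v : ℕ, 1 ≤ v →
      ((v : ℤ) ≤ u (i - 1) ∧ (v : ℤ) ≤ u i ∧ (v : ℤ) ≤ u (i + 1) ∧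
        (v : ℤ) ≤ u (i + 2) ∧ (v : ℤ) ≤ u (i + 3)) →
      ∃ ε : ℝ, |ε| ≤ 1 ∧
        |(p (i) : ℝ) ^ 2 - (D : ℝ) * (q (i) : ℝ) ^ 2| / (2 * Real.sqrt D)
          = (1 / (u (i + 1) : ℝ))
              * (1 - 1 / ((u i : ℝ) * (u (i + 1) : ℝ)) - 1 / ((u (i + 1) : ℝ) * (u (i + 2) : ℝ)))
            + 10 * ε / (v : ℝ) ^ 5 := by
  intro i hi v hv hvu
  have h : IsCFExpansion √D u c p q :=
    ⟨irrational_sqrt_natCast_iff.mpr (not_isSquare_of_mod_four hD4), hc0, hu, hcrec, hpm, hqm,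
      hp0, hq0, hprec, hqrec⟩
  have hV : (1 : ℝ) ≤ v := by exact_mod_cast hv
  obtain ⟨h₁, h₂, h₃, h₄, h₅⟩ : (v : ℝ) ≤ u (i - 1) ∧ (v : ℝ) ≤ u i ∧ (v : ℝ) ≤ u (i + 1) ∧
      (v : ℝ) ≤ u (i + 2) ∧ (v : ℝ) ≤ u (i + 3) := by exact_mod_cast hvu
  have hD : |(p i : ℝ) ^ 2 - D * (q i : ℝ) ^ 2| = |(p i : ℝ) ^ 2 - √D ^ 2 * (q i : ℝ) ^ 2| := by
    rw [sq_sqrt (Nat.cast_nonneg D)]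
  refine exists_eq_add_div_of_abs_sub_le (by norm_num) (by positivity) ?_
  rw [hD]
  calc _ ≤ 1 / (v : ℝ) ^ 5 + 6 / (v : ℝ) ^ 5 :=
        (abs_sub_le _ _ _).trans (add_le_add
          (h.abs_norm_div_sub_le h.c_one_le_two_mul_sqrt hi hV h₁ h₂ h₃)
          (h.abs_q_div_sub_expansion_le hi (by linarith) h₁ h₂ h₃ h₄ h₅))
    _ ≤ 10 / (v : ℝ) ^ 5 := by rw [← add_div]; gcongr; norm_num

theorem stmt9 (D : ℕ) (hDsf : Squarefree D) (hD4 : D % 4 = 2 ∨ D % 4 = 3)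
    (u : ℤ → ℤ) (c : ℤ → ℝ)
    (hc0 : c 0 = Real.sqrt D)
    (hu : ∀ i : ℤ, 0 ≤ i → u i = ⌊c i⌋)
    (hcrec : ∀ i : ℤ, 0 ≤ i → c (i + 1) = 1 / (c i - u i))
    (p q : ℤ → ℤ)
    (hpm : p (-1) = 1) (hqm : q (-1) = 0)
    (hp0 : p 0 = u 0) (hq0 : q 0 = 1)
    (hprec : ∀ i : ℤ, 0 ≤ i → p (i + 1) = u (i + 1) * p i + p (i - 1))
    (hqrec : ∀ i : ℤ, 0 ≤ i → q (i + 1) = u (i + 1) * q i + q (i - 1)) :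
    ∀ i : ℤ, 1 ≤ i → ∀ v : ℕ, 1 ≤ v →
      ((v : ℤ) ≤ u (i - 1) ∧ (v : ℤ) ≤ u i ∧ (v : ℤ) ≤ u (i + 1) ∧
        (v : ℤ) ≤ u (i + 2) ∧ (v : ℤ) ≤ u (i + 3)) →
      ∃ ε : ℝ, |ε| ≤ 1 ∧
        |(p (i) : ℝ) ^ 2 - (D : ℝ) * (q (i) : ℝ) ^ 2| / (2 * Real.sqrt D)
          = (1 / (u (i + 1) : ℝ))
              * (1 - 1 / ((u i : ℝ) * (u (i + 1) : ℝ)) - 1 / ((u (i + 1) : ℝ) * (u (i + 2) : ℝ)))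
            + 10 * ε / (v : ℝ) ^ 5 :=
  stmt9_general D hD4 u c hc0 hu hcrec p q hpm hqm hp0 hq0 hprec hqrec
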